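/- If p is a prime v-palindrome, then r(p) > p and r(p) is composite. -/

import Mathlib

/-!
For every `n ≥ 1` we have `v n ≤ n`: each summand `q + α·[α > 1]` of `v n` is at most `q ^ α`,
and a sum of numbers `≥ 2` is at most their product. A prime `p` satisfies `v p = p`, so
`p = v p = v (r p) ≤ r p`, which forces `r p > p`; if `r p` were prime, then `v (r p) = r p`
would give `p = r p`.
-/

def r (n : ℕ) : ℕ := Nat.ofDigits 10 ((Nat.digits 10 n).reverse)

def v (n : ℕ) : ℤ :=
  ∑ p ∈ n.primeFactors,
    ((p : ℤ) + if 2 ≤ n.factorization p then (n.factorization p : ℤ) else 0)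

theorem Finset.sum_le_prod_of_two_le {ι R : Type*} [CommSemiring R] [LinearOrder R]
    [IsStrictOrderedRing R] {s : Finset ι} {f : ι → R} (hf : ∀ i ∈ s, 2 ≤ f i) :
    ∑ i ∈ s, f i ≤ ∏ i ∈ s, f i := by
  induction s using Finset.cons_induction with
  | empty => simp
  | cons a s ha ih =>
    rw [Finset.sum_cons, Finset.prod_cons]
    have hfa : 2 ≤ f a := hf a (Finset.mem_cons_self a s)
    have ih := ih fun i hi ↦ hf i (Finset.mem_cons_of_mem hi)
    rcases s.eq_empty_or_nonempty with rfl | ⟨b, hb⟩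
    · simp
    have hprod : 2 ≤ ∏ i ∈ s, f i :=
      calc 2 ≤ f b := hf b (Finset.mem_cons_of_mem hb)
        _ ≤ ∑ i ∈ s, f i := Finset.single_le_sum
            (fun i hi ↦ zero_le_two.trans (hf i (Finset.mem_cons_of_mem hi))) hb
        _ ≤ ∏ i ∈ s, f i := ih
    calc f a + ∑ i ∈ s, f i ≤ f a + ∏ i ∈ s, f i := by gcongr
      _ ≤ f a * ∏ i ∈ s, f i := add_le_mul hfa hprod

theorem Nat.add_le_pow {q a : ℕ} (hq : 2 ≤ q) (ha : 2 ≤ a) : q + a ≤ q ^ a := by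
  induction a, ha using Nat.le_induction with
  | base => nlinarith
  | succ a _ ih =>
    have : 1 ≤ q ^ a := Nat.one_le_pow _ _ (by omega)
    rw [pow_succ]
    nlinarith

theorem add_ite_le_pow {q α : ℕ} (hq : 2 ≤ q) (hα : 1 ≤ α) :
    q + (if 2 ≤ α then α else 0) ≤ q ^ α := by
  split_ifs with h
  · exact Nat.add_le_pow hq h
  · obtain rfl : α = 1 := by omega
    simp

theorem v_le_self (n : ℕ) : v n ≤ n := by
  rcases Nat.eq_zero_or_pos n with rfl | hn
  · simp [v]
  have hfac {q : ℕ} (hq : q ∈ n.primeFactors) : q.Prime ∧ 1 ≤ n.factorization q :=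
    ⟨Nat.prime_of_mem_primeFactors hq,
      (Nat.prime_of_mem_primeFactors hq).factorization_pos_of_dvd hn.ne'
        (Nat.dvd_of_mem_primeFactors hq)⟩
  calc v n ≤ ∑ q ∈ n.primeFactors, ((q ^ n.factorization q : ℕ) : ℤ) := by
        refine Finset.sum_le_sum fun q hq ↦ ?_
        have := add_ite_le_pow (hfac hq).1.two_le (hfac hq).2
        split_ifs at this ⊢ <;> exact_mod_cast this
    _ ≤ ∏ q ∈ n.primeFactors, ((q ^ n.factorization q : ℕ) : ℤ) := by
        refine Finset.sum_le_prod_of_two_le fun q hq ↦ ?_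
        have := Nat.pow_le_pow_right (hfac hq).1.one_lt.le (hfac hq).2
        rw [pow_one] at this
        exact_mod_cast (hfac hq).1.two_le.trans this
    _ = n := by exact_mod_cast Nat.prod_factorization_pow_eq_self hn.ne'

theorem v_prime {p : ℕ} (hp : p.Prime) : v p = p := by
  simp [v, hp.primeFactors, hp.factorization]

theorem stmt_13_general (p : ℕ) (hp : p.Prime) (hne : p ≠ r p)
    (hv : v p = v (r p)) :
    p < r p ∧ 1 < r p ∧ ¬ (r p).Prime := by
  have hle : p ≤ r p := by
    have := v_le_self (r p)
    rw [← hv, v_prime hp] at this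
    exact_mod_cast this
  have hlt : p < r p := lt_of_le_of_ne hle hne
  refine ⟨hlt, hp.one_lt.trans hlt, fun hr ↦ hne ?_⟩
  rw [v_prime hp, v_prime hr] at hv
  exact_mod_cast hv

theorem stmt_13 (p : ℕ) (hp : p.Prime) (h10 : ¬ 10 ∣ p) (hne : p ≠ r p)
    (hv : v p = v (r p)) :
    p < r p ∧ 1 < r p ∧ ¬ (r p).Prime :=
  stmt_13_general p hp hne hv
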